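/- arXiv:1811.03586 — 3 statements merged into one kernel-verified Lean document; each statement's English description precedes it below -/
import Mathlib

section
/- The polynomial f(X,Y) = (1 - X²)·Y² + 1 is strictly positive on [-1,1] × ℝ, but f does not belong to the quadratic module generated by (1 - X²)³ in ℝ[X,Y], i.e., f cannot be written as σ₀ + σ₁·(1-X²)³ with σ₀, σ₁ sums of squares in ℝ[X,Y]. -/
/-!
Specialising `X` to a point `x ∈ (-1, 1)` turns `f = σ₀ + σ₁ (1 - X²)³` into an identity of real
polynomials in `Y` in which every summand has nonnegative leading coefficient, so top terms cannot
cancel: every square in `σ₀` has `Y`-degree at most `1` over infinitely many `x`, hence in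
`ℝ[X][Y]`. Comparing `Y²`-coefficients gives `1 - X² = s + t (1 - X²)³` in `ℝ[X]` with `s` a sum of
squares. This is Stengle's obstruction: `s` vanishes at `1`, so `(X - 1)²` divides `s`, hence also
`1 - X²`, which has only a simple root at `1`.
-/

open Polynomial

theorem IsSumSq.map {R S F : Type*} [NonAssocSemiring R] [NonAssocSemiring S] [FunLike F R S]
    [RingHomClass F R S] (f : F) {s : R} (hs : IsSumSq s) : IsSumSq (f s) := by
  induction hs with
  | zero => simp
  | sq_add a _ ih => simpa using ih.sq_add (f a)

namespace Polynomial

theorem natDegree_le_of_forall_natDegree_map_evalRingHom_le {R : Type*} [CommRing R] [IsDomain R]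
    {S : Set R} (hS : S.Infinite) {p : R[X][X]} {n : ℕ}
    (h : ∀ x ∈ S, (p.map (evalRingHom x)).natDegree ≤ n) : p.natDegree ≤ n := by
  rw [natDegree_le_iff_coeff_eq_zero]
  intro k hk
  refine eq_zero_of_infinite_isRoot _ (hS.mono fun x hx => ?_)
  simpa using coeff_eq_zero_of_natDegree_lt ((h x hx).trans_lt hk)

section LinearOrderedRing

variable {R : Type*} [CommRing R] [LinearOrder R] [IsStrictOrderedRing R] {p q : R[X]} {S : Set R}

theorem leadingCoeff_add_nonneg (hp : 0 ≤ p.leadingCoeff) (hq : 0 ≤ q.leadingCoeff) :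
    0 ≤ (p + q).leadingCoeff := by
  rcases lt_trichotomy p.degree q.degree with h | h | h
  · rwa [leadingCoeff_add_of_degree_lt h]
  · by_cases hpq : p.leadingCoeff + q.leadingCoeff = 0
    · have hp0 : p.leadingCoeff = 0 := by linarith
      have hq0 : q.leadingCoeff = 0 := by linarith
      simp [leadingCoeff_eq_zero.1 hp0, leadingCoeff_eq_zero.1 hq0]
    · rw [leadingCoeff_add_of_degree_eq h hpq]
      exact add_nonneg hp hq
  · rwa [leadingCoeff_add_of_degree_lt' h]

theorem natDegree_le_natDegree_add (hp : 0 ≤ p.leadingCoeff) (hq : 0 ≤ q.leadingCoeff) :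
    p.natDegree ≤ (p + q).natDegree := by
  rcases eq_or_ne p 0 with rfl | hp0
  · simp
  have hsum : p.leadingCoeff + q.leadingCoeff ≠ 0 :=
    (add_pos_of_pos_of_nonneg (hp.lt_of_ne' (leadingCoeff_ne_zero.2 hp0)) hq).ne'
  exact natDegree_le_natDegree (degree_add_eq_of_leadingCoeff_add_ne_zero hsum ▸ le_max_left _ _)

theorem leadingCoeff_nonneg_of_isSumSq (hp : IsSumSq p) : 0 ≤ p.leadingCoeff := by
  induction hp with
  | zero => simp
  | sq_add a _ ih =>
    exact leadingCoeff_add_nonneg (by rw [leadingCoeff_mul]; exact mul_self_nonneg _) ih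

theorem sq_X_sub_C_dvd_of_isSumSq_of_isRoot (hp : IsSumSq p) {a : R} (ha : p.IsRoot a) :
    (X - C a) ^ 2 ∣ p := by
  induction hp with
  | zero => simp
  | @sq_add b s hs ih =>
    have hb : 0 ≤ (b * b).eval a := by rw [eval_mul]; exact mul_self_nonneg _
    have hs' : 0 ≤ s.eval a := (hs.map (evalRingHom a)).nonneg
    rw [IsRoot, eval_add, add_eq_zero_iff_of_nonneg hb hs', eval_mul, mul_self_eq_zero] at ha
    have hX : X - C a ∣ b := dvd_iff_isRoot.2 ha.1
    exact dvd_add (sq (X - C a) ▸ mul_dvd_mul hX hX) (ih ha.2)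

theorem one_sub_X_sq_ne_isSumSq_add_mul {n : ℕ} (hn : 2 ≤ n) {s : R[X]} (hs : IsSumSq s)
    (t : R[X]) : (1 - X ^ 2 : R[X]) ≠ s + t * (1 - X ^ 2) ^ n := by
  intro h
  have hroot : (1 - X ^ 2 : R[X]).IsRoot 1 := by simp
  have hs1 : s.IsRoot 1 := by
    have := congrArg (eval 1) h
    simp only [eval_add, eval_mul, eval_pow, hroot.eq_zero, zero_pow (by omega : n ≠ 0), mul_zero,
      add_zero] at this
    exact this.symm
  have hdvd : (X - C 1) ^ 2 ∣ (1 - X ^ 2 : R[X]) := by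
    rw [h]
    refine dvd_add (sq_X_sub_C_dvd_of_isSumSq_of_isRoot hs hs1) (dvd_mul_of_dvd_right ?_ t)
    exact (pow_dvd_pow_of_dvd (dvd_iff_isRoot.2 hroot) 2).trans (pow_dvd_pow _ hn)
  have hfac : (1 - X ^ 2 : R[X]) = (X - C 1) * -(X + C 1) := by simp only [map_one]; ring
  rw [hfac, sq, mul_dvd_mul_iff_left (X_sub_C_ne_zero 1), dvd_iff_isRoot] at hdvd
  simp at hdvd

theorem isSumSq_coeff_of_natDegree_map_evalRingHom_le (hS : S.Infinite) {σ : R[X][X]}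
    (hσ : IsSumSq σ) {m : ℕ} (h : ∀ x ∈ S, (σ.map (evalRingHom x)).natDegree ≤ 2 * m) :
    IsSumSq (σ.coeff (2 * m)) := by
  induction hσ with
  | zero => simp
  | @sq_add a s hs ih =>
    have hfib : ∀ x ∈ S, (a.map (evalRingHom x)).natDegree ≤ m ∧
        (s.map (evalRingHom x)).natDegree ≤ 2 * m := by
      intro x hx
      have hx := h x hx
      rw [Polynomial.map_add, Polynomial.map_mul] at hx
      have ha := leadingCoeff_nonneg_of_isSumSq (IsSumSq.mul_self (a.map (evalRingHom x)))
      have hs := leadingCoeff_nonneg_of_isSumSq (p := s.map (evalRingHom x))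
        (hs.map (mapRingHom (evalRingHom x)))
      have h1 := (natDegree_le_natDegree_add ha hs).trans hx
      rw [add_comm] at hx
      rw [← sq, natDegree_pow] at h1
      exact ⟨by omega, (natDegree_le_natDegree_add hs ha).trans hx⟩
    have ha := natDegree_le_of_forall_natDegree_map_evalRingHom_le hS fun x hx => (hfib x hx).1
    rw [coeff_add, two_mul, coeff_mul_add_eq_of_natDegree_le ha ha, ← two_mul]
    exact (ih fun x hx => (hfib x hx).2).sq_add _

theorem isSumSq_coeff_of_natDegree_add_mul_C_le (hS : S.Infinite) {w : R[X]}
    (hw : ∀ x ∈ S, 0 < w.eval x) {σ₀ σ₁ : R[X][X]} (h₀ : IsSumSq σ₀) (h₁ : IsSumSq σ₁) {m : ℕ}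
    (hdeg : (σ₀ + σ₁ * C w).natDegree ≤ 2 * m) : IsSumSq (σ₀.coeff (2 * m)) := by
  refine isSumSq_coeff_of_natDegree_map_evalRingHom_le hS h₀ fun x hx => ?_
  have hx' := (natDegree_map_le (f := evalRingHom x)).trans hdeg
  rw [Polynomial.map_add, Polynomial.map_mul, map_C, coe_evalRingHom] at hx'
  have h₀ := leadingCoeff_nonneg_of_isSumSq (p := σ₀.map (evalRingHom x))
    (h₀.map (mapRingHom (evalRingHom x)))
  have h₁ : 0 ≤ (σ₁.map (evalRingHom x) * C (w.eval x)).leadingCoeff := by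
    rw [leadingCoeff_mul, leadingCoeff_C]
    exact mul_nonneg (leadingCoeff_nonneg_of_isSumSq (h₁.map (mapRingHom (evalRingHom x))))
      (hw x hx).le
  exact (natDegree_le_natDegree_add h₀ h₁).trans hx'

end LinearOrderedRing

end Polynomial

/-- In `ℝ[X,Y]`, represented as `(ℝ[X])[Y]`, the polynomial
`f = (1 - X²)·Y² + 1` is strictly positive on `[-1,1] × ℝ`, yet `f` is not of the
form `σ₀ + σ₁·(1 - X²)³` with `σ₀, σ₁` sums of squares in `ℝ[X,Y]`. -/
theorem stmt_4 :
    (∀ x : ℝ, x ∈ Set.Icc (-1 : ℝ) 1 → ∀ y : ℝ,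
      0 < Polynomial.eval y
        ((C ((1 : Polynomial ℝ) - X ^ 2) * X ^ 2 + 1).map (Polynomial.evalRingHom x))) ∧
    ¬ ∃ σ₀ σ₁ : Polynomial (Polynomial ℝ), IsSumSq σ₀ ∧ IsSumSq σ₁ ∧
      C ((1 : Polynomial ℝ) - X ^ 2) * X ^ 2 + 1 =
        σ₀ + σ₁ * C (((1 : Polynomial ℝ) - X ^ 2) ^ 3) := by
  constructor
  · intro x hx y
    have hx2 : 0 ≤ 1 - x ^ 2 := by nlinarith [hx.1, hx.2]
    simp only [Polynomial.map_add, Polynomial.map_mul, Polynomial.map_pow, Polynomial.map_one,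
      map_C, map_X, coe_evalRingHom, eval_add, eval_mul, eval_pow, eval_one, eval_C, eval_X,
      eval_sub]
    positivity
  · rintro ⟨σ₀, σ₁, h₀, h₁, hf⟩
    have hw : ∀ x ∈ Set.Ioo (-1 : ℝ) 1, 0 < eval x (((1 : ℝ[X]) - X ^ 2) ^ 3) := by
      intro x hx
      have : 0 < 1 - x ^ 2 := by nlinarith [hx.1, hx.2]
      simp only [eval_pow, eval_sub, eval_one, eval_X]
      positivity
    have hdeg : (σ₀ + σ₁ * C (((1 : ℝ[X]) - X ^ 2) ^ 3)).natDegree ≤ 2 * 1 := by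
      rw [← hf]
      compute_degree
    have hs := isSumSq_coeff_of_natDegree_add_mul_C_le (Set.Ioo_infinite (by norm_num))
      hw h₀ h₁ hdeg
    refine one_sub_X_sq_ne_isSumSq_add_mul (by norm_num : 2 ≤ 3) hs (σ₁.coeff 2) ?_
    have h2 := congrArg (coeff · 2) hf
    simpa only [coeff_add, coeff_C_mul, coeff_mul_C, coeff_X_pow_self, coeff_one, mul_one,
      OfNat.ofNat_ne_zero, if_false, add_zero] using h2
end

section
/- For nonzero polynomials g₁, …, g_s in ℝ[X₁,…,Xₙ], the norm of their product satisfies ‖g₁⋯g_s‖ ≤ (deg g₁ + 1)⋯(deg g_s + 1)·‖g₁‖⋯‖g_s‖, where for f = Σ_{|α|≤d} (|α| choose α)·a_α·X^α one defines ‖f‖ = max |a_α|. -/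
/-!
Write `‖f‖ = mnorm f` and `|β| = β.degree`. The coefficient of `X^α` in `f * g` is
`∑_{β + γ = α} f_β g_γ`, where only `|β| ≤ deg f` contributes and `|f_β| ≤ ‖f‖ binom(|β|, β)`.
For each `k ≤ |α|`, comparing coefficients of `X^α` in
`(∑ X_i)^k (∑ X_i)^(|α| - k) = (∑ X_i)^|α|` gives the multinomial Vandermonde identity
`∑_{β + γ = α, |β| = k} binom(|β|, β) binom(|γ|, γ) = binom(|α|, α)`.
Summing over `k ≤ deg f` yields `‖f g‖ ≤ (deg f + 1) ‖f‖ ‖g‖`, and induction on the number of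
factors gives the theorem.
-/

open MvPolynomial

/-- The multinomial-scaled sup norm: writing `f = ∑ binom(|α|,α) a_α X^α`,
`mnorm f = max_α |a_α|`, where `a_α = coeff α f / binom(|α|,α)`. -/
noncomputable def mnorm {n : ℕ} (f : MvPolynomial (Fin n) ℝ) : ℝ :=
  ⨆ α : Fin n →₀ ℕ, |coeff α f| / (Nat.multinomial Finset.univ α : ℝ)

open Finset

theorem MvPolynomial.coeff_sum_X_pow_eq_ite_degree {σ R : Type*} [Fintype σ] [CommSemiring R]
    (d : σ →₀ ℕ) (n : ℕ) :
    coeff d ((∑ i, X i : MvPolynomial σ R) ^ n) =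
      if d.degree = n then (d.multinomial : R) else 0 := by
  rw [coeff_sum_X_pow_of_fintype, Nat.cast_ite, Nat.cast_zero]; rfl

namespace Finsupp

theorem multinomial_eq_multinomial_univ {σ : Type*} [Fintype σ] (α : σ →₀ ℕ) :
    α.multinomial = Nat.multinomial univ α :=
  multinomial_eq_of_support_subset (subset_univ _)

variable {σ : Type*} [Fintype σ] [DecidableEq σ]

theorem sum_antidiagonal_degree_fst_eq_multinomial_mul_le (α : σ →₀ ℕ) (k : ℕ) :
    ∑ p ∈ antidiagonal α with p.1.degree = k, p.1.multinomial * p.2.multinomial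
      ≤ α.multinomial := by
  by_cases hk : k ≤ α.degree
  · refine le_of_eq ?_
    have h := congrArg (coeff α) (pow_mul_pow_sub (∑ i, X i : MvPolynomial σ ℕ) hk)
    rw [coeff_mul, coeff_sum_X_pow_eq_ite_degree, if_pos rfl, Nat.cast_id] at h
    rw [← h, sum_filter]
    refine Finset.sum_congr rfl fun p hp => ?_
    have hdeg : p.1.degree + p.2.degree = α.degree := by
      rw [← map_add, HasAntidiagonal.mem_antidiagonal.mp hp]
    simp only [coeff_sum_X_pow_eq_ite_degree, Nat.cast_id]
    split_ifs <;> first | rfl | omega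
  · rw [sum_eq_zero]
    · exact Nat.zero_le _
    intro p hp
    rw [mem_filter, HasAntidiagonal.mem_antidiagonal] at hp
    have := degree_mono (le_iff_exists_add.mpr ⟨p.2, hp.1.symm⟩)
    omega

theorem sum_antidiagonal_degree_fst_le_multinomial_mul_le (α : σ →₀ ℕ) (d : ℕ) :
    ∑ p ∈ antidiagonal α with p.1.degree ≤ d, p.1.multinomial * p.2.multinomial
      ≤ (d + 1) * α.multinomial := by
  have hmaps : ∀ p ∈ {p ∈ antidiagonal α | p.1.degree ≤ d}, p.1.degree ∈ range (d + 1) :=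
    fun p hp => mem_range_succ_iff.mpr (mem_filter.mp hp).2
  rw [← Finset.sum_fiberwise_of_maps_to hmaps]
  calc _ ≤ ∑ k ∈ range (d + 1), ∑ p ∈ antidiagonal α with p.1.degree = k,
          p.1.multinomial * p.2.multinomial :=
        Finset.sum_le_sum fun k _ =>
          sum_le_sum_of_subset (filter_subset_filter _ (filter_subset _ _))
    _ ≤ ∑ _k ∈ range (d + 1), α.multinomial :=
        Finset.sum_le_sum fun k _ => sum_antidiagonal_degree_fst_eq_multinomial_mul_le α k
    _ = (d + 1) * α.multinomial := by rw [sum_const, card_range, smul_eq_mul]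

end Finsupp

section mnorm

variable {n : ℕ}

theorem bddAbove_range_abs_coeff_div_multinomial (f : MvPolynomial (Fin n) ℝ) :
    BddAbove (Set.range fun α : Fin n →₀ ℕ => |coeff α f| / (Nat.multinomial univ α : ℝ)) := by
  refine (((f.support.image fun α => |coeff α f| / (Nat.multinomial univ α : ℝ)
    ).finite_toSet.insert 0).subset ?_).bddAbove
  rintro _ ⟨α, rfl⟩
  by_cases h : α ∈ f.support
  · exact Or.inr (mem_image_of_mem _ h)
  · simp [notMem_support_iff.mp h]

theorem abs_coeff_le_mnorm_mul (f : MvPolynomial (Fin n) ℝ) (α : Fin n →₀ ℕ) :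
    |coeff α f| ≤ mnorm f * α.multinomial := by
  rw [Finsupp.multinomial_eq_multinomial_univ,
    ← div_le_iff₀ (by exact_mod_cast Nat.multinomial_pos _ _)]
  exact le_ciSup (bddAbove_range_abs_coeff_div_multinomial f) α

theorem mnorm_nonneg (f : MvPolynomial (Fin n) ℝ) : 0 ≤ mnorm f :=
  Real.iSup_nonneg fun _ => by positivity

theorem mnorm_le_of_abs_coeff_le {f : MvPolynomial (Fin n) ℝ} {C : ℝ} (hC : 0 ≤ C)
    (h : ∀ α, |coeff α f| ≤ C * α.multinomial) : mnorm f ≤ C := by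
  refine Real.iSup_le (fun α => ?_) hC
  rw [← Finsupp.multinomial_eq_multinomial_univ,
    div_le_iff₀ (by exact_mod_cast Nat.multinomial_pos _ _)]
  exact h α

theorem mnorm_one_le : mnorm (1 : MvPolynomial (Fin n) ℝ) ≤ 1 := by
  refine mnorm_le_of_abs_coeff_le zero_le_one fun α => ?_
  have : (1 : ℝ) ≤ α.multinomial := by exact_mod_cast Nat.multinomial_pos _ _
  rw [coeff_one, one_mul]
  split_ifs <;> simp [this]

theorem mnorm_mul_le (f g : MvPolynomial (Fin n) ℝ) :
    mnorm (f * g) ≤ (f.totalDegree + 1 : ℝ) * mnorm f * mnorm g := by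
  have hf := mnorm_nonneg f
  have hg := mnorm_nonneg g
  refine mnorm_le_of_abs_coeff_le (by positivity) fun α => ?_
  have hcoeff : coeff α (f * g) = ∑ p ∈ antidiagonal α with p.1.degree ≤ f.totalDegree,
      coeff p.1 f * coeff p.2 g := by
    rw [coeff_mul, sum_filter_of_ne]
    intro p _ hp
    by_contra! hlt
    exact hp (by rw [coeff_eq_zero_of_totalDegree_lt hlt, zero_mul])
  have hcomb : ∑ p ∈ antidiagonal α with p.1.degree ≤ f.totalDegree,
      (p.1.multinomial * p.2.multinomial : ℝ) ≤ (f.totalDegree + 1) * α.multinomial := by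
    exact_mod_cast Finsupp.sum_antidiagonal_degree_fst_le_multinomial_mul_le α f.totalDegree
  calc |coeff α (f * g)|
      ≤ ∑ p ∈ antidiagonal α with p.1.degree ≤ f.totalDegree, |coeff p.1 f| * |coeff p.2 g| := by
        rw [hcoeff]
        simpa only [abs_mul] using
          abs_sum_le_sum_abs (fun p : (Fin n →₀ ℕ) × (Fin n →₀ ℕ) => coeff p.1 f * coeff p.2 g) _
    _ ≤ ∑ p ∈ antidiagonal α with p.1.degree ≤ f.totalDegree,
          mnorm f * mnorm g * (p.1.multinomial * p.2.multinomial : ℝ) := by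
        refine sum_le_sum fun p _ => ?_
        exact (mul_le_mul (abs_coeff_le_mnorm_mul f p.1) (abs_coeff_le_mnorm_mul g p.2)
          (abs_nonneg _) (by positivity)).trans_eq (by ring)
    _ ≤ mnorm f * mnorm g * ((f.totalDegree + 1) * α.multinomial) := by
        rw [← mul_sum]; gcongr
    _ = (f.totalDegree + 1) * mnorm f * mnorm g * α.multinomial := by ring

theorem mnorm_prod_le {ι : Type*} (s : Finset ι) (g : ι → MvPolynomial (Fin n) ℝ) :
    mnorm (∏ i ∈ s, g i) ≤ ∏ i ∈ s, (((g i).totalDegree + 1 : ℝ) * mnorm (g i)) := by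
  classical
  induction s using Finset.induction_on with
  | empty => simpa using mnorm_one_le
  | insert a s ha ih =>
    rw [prod_insert ha, prod_insert ha]
    calc mnorm (g a * ∏ i ∈ s, g i)
        ≤ ((g a).totalDegree + 1 : ℝ) * mnorm (g a) * mnorm (∏ i ∈ s, g i) := mnorm_mul_le _ _
      _ ≤ _ := by have := mnorm_nonneg (g a); gcongr

end mnorm

theorem stmt_6_general {n s : ℕ} (g : Fin s → MvPolynomial (Fin n) ℝ) :
    mnorm (∏ i, g i) ≤ ∏ i, (((g i).totalDegree + 1 : ℝ) * mnorm (g i)) :=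
  mnorm_prod_le univ g

theorem stmt_6 {n s : ℕ} (g : Fin s → MvPolynomial (Fin n) ℝ)
    (hg : ∀ i, g i ≠ 0) :
    mnorm (∏ i, g i) ≤ ∏ i, (((g i).totalDegree + 1 : ℝ) * mnorm (g i)) :=
  stmt_6_general g
end

section
/- Let S ⊆ ℝⁿ be nonempty and compact, and f ∈ ℝ[X₁,…,Xₙ,Y] with deg_Y f = m, fully m-ic on S, and f > 0 on S × ℝ. Let f̄(X,Y,Z) = Σᵢ fᵢ(X)YⁱZ^{m−i} be the homogenization of f in Y. Then f̄ > 0 on the compact set S × C, where C = {(y,z) ∈ ℝ² : y² + z² = 1}. -/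
open MvPolynomial

/-!
Fix `x ∈ S` and let `p = f(x, ·) ∈ ℝ[Y]`; by fullness it has degree exactly `m`. A polynomial
positive on all of `ℝ` has positive leading coefficient and even degree. Hence on the circle,
`f̄(x, y, z) = z ^ m * p (y / z) > 0` when `z ≠ 0`, and `f̄(x, y, 0) = lc p * y ^ m > 0` with `y ≠ 0`.
-/

/-- Evaluation of the `Y`-homogenization (in degree `m`) of `f` at `(x, y, z)`. -/
noncomputable def evalBar {n : ℕ} (f : Polynomial (MvPolynomial (Fin n) ℝ)) (m : ℕ)
    (x : Fin n → ℝ) (y z : ℝ) : ℝ :=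
  ∑ i ∈ Finset.range (m + 1), eval x (f.coeff i) * y ^ i * z ^ (m - i)

namespace Polynomial

theorem leadingCoeff_comp_neg_X {R : Type*} [CommRing R] [NoZeroDivisors R] (p : R[X]) :
    (p.comp (-X)).leadingCoeff = (-1) ^ p.natDegree * p.leadingCoeff := by
  nontriviality R
  rw [leadingCoeff_comp (by simp), leadingCoeff_neg, leadingCoeff_X, mul_comm]

theorem sum_range_coeff_mul_pow_mul_pow_of_ne_zero {K : Type*} [Field K] {p : K[X]} {m : ℕ}
    (hp : p.natDegree ≤ m) (y : K) {z : K} (hz : z ≠ 0) :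
    ∑ i ∈ Finset.range (m + 1), p.coeff i * y ^ i * z ^ (m - i) = z ^ m * p.eval (y / z) := by
  rw [eval_eq_sum_range' (Nat.lt_succ_of_le hp), Finset.mul_sum]
  refine Finset.sum_congr rfl fun i hi => ?_
  rw [div_pow, pow_sub₀ z hz (Nat.lt_succ_iff.mp (Finset.mem_range.mp hi))]
  field_simp

theorem sum_range_coeff_mul_pow_mul_zero_pow {R : Type*} [CommSemiring R] (p : R[X]) (m : ℕ)
    (y : R) :
    ∑ i ∈ Finset.range (m + 1), p.coeff i * y ^ i * 0 ^ (m - i) = p.coeff m * y ^ m := by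
  rw [Finset.sum_eq_single_of_mem m (Finset.self_mem_range_succ m)]
  · simp
  · intro i hi hne
    have him : i < m := lt_of_le_of_ne (Nat.lt_succ_iff.mp (Finset.mem_range.mp hi)) hne
    rw [zero_pow (Nat.sub_pos_of_lt him).ne', mul_zero]

section Ordered

variable {𝕜 : Type*} [NormedField 𝕜] [LinearOrder 𝕜] [IsStrictOrderedRing 𝕜] [OrderTopology 𝕜]
  {p : 𝕜[X]}

theorem leadingCoeff_pos_of_forall_eval_pos (hp : ∀ y, 0 < p.eval y) : 0 < p.leadingCoeff := by
  rcases Nat.eq_zero_or_pos p.natDegree with hdeg | hdeg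
  · rw [leadingCoeff, hdeg, coeff_zero_eq_eval_zero]
    exact hp 0
  · by_contra! hlc
    obtain ⟨y, hy⟩ := ((p.tendsto_atBot_of_leadingCoeff_nonpos
      (natDegree_pos_iff_degree_pos.mp hdeg) hlc).eventually_lt_atBot 0).exists
    exact (hp y).not_gt hy

/-- `p` and `p(-X)` both have positive leading coefficient, and these differ by `(-1) ^ deg p`. -/
theorem even_natDegree_of_forall_eval_pos (hp : ∀ y, 0 < p.eval y) : Even p.natDegree := by
  by_contra hodd
  have hneg : ∀ y, 0 < (p.comp (-X)).eval y := fun y => by simpa using hp (-y)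
  have h := leadingCoeff_pos_of_forall_eval_pos hneg
  rw [leadingCoeff_comp_neg_X, (Nat.not_even_iff_odd.mp hodd).neg_one_pow, neg_one_mul,
    neg_pos] at h
  exact h.not_gt (leadingCoeff_pos_of_forall_eval_pos hp)

theorem sum_range_coeff_mul_pow_mul_pow_pos (hp : ∀ y, 0 < p.eval y) {y z : 𝕜}
    (hyz : y ≠ 0 ∨ z ≠ 0) :
    0 < ∑ i ∈ Finset.range (p.natDegree + 1), p.coeff i * y ^ i * z ^ (p.natDegree - i) := by
  have heven := even_natDegree_of_forall_eval_pos hp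
  by_cases hz : z = 0
  · subst hz
    rw [sum_range_coeff_mul_pow_mul_zero_pow, ← leadingCoeff]
    exact mul_pos (leadingCoeff_pos_of_forall_eval_pos hp)
      (heven.pow_pos (hyz.resolve_right fun h => h rfl))
  · rw [sum_range_coeff_mul_pow_mul_pow_of_ne_zero le_rfl y hz]
    exact mul_pos (heven.pow_pos hz) (hp _)

end Ordered

end Polynomial

theorem stmt_17_general {n : ℕ} (S : Set (EuclideanSpace ℝ (Fin n)))
    (f : Polynomial (MvPolynomial (Fin n) ℝ)) (m : ℕ) (hm : f.natDegree = m)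
    (hfull : ∀ x ∈ S, eval (⇑x) (f.coeff m) ≠ 0)
    (hpos : ∀ x ∈ S, ∀ y : ℝ,
      0 < Polynomial.eval y (f.map (eval (⇑x)))) :
    ∀ x ∈ S, ∀ y z : ℝ, y ^ 2 + z ^ 2 = 1 → 0 < evalBar f m (⇑x) y z := by
  intro x hx y z hyz
  have hdeg : (f.map (eval ⇑x)).natDegree = m :=
    le_antisymm (hm ▸ Polynomial.natDegree_map_le)
      (Polynomial.le_natDegree_of_ne_zero (by rw [Polynomial.coeff_map]; exact hfull x hx))
  have hyz₀ : y ≠ 0 ∨ z ≠ 0 := by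
    by_contra! h
    simp [h.1, h.2] at hyz
  have hsum := Polynomial.sum_range_coeff_mul_pow_mul_pow_pos (hpos x hx) hyz₀
  rw [hdeg] at hsum
  simpa only [evalBar, Polynomial.coeff_map] using hsum

/-- If `S ⊆ ℝⁿ` is nonempty compact, `f ∈ ℝ[X̄,Y]` has `Y`-degree `m`, is fully `m`-ic
on `S` and positive on `S × ℝ`, then its `Y`-homogenization `f̄` is positive on `S × C`,
where `C` is the unit circle. -/
theorem stmt_17 {n : ℕ} (S : Set (EuclideanSpace ℝ (Fin n)))
    (hSne : S.Nonempty) (hScomp : IsCompact S)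
    (f : Polynomial (MvPolynomial (Fin n) ℝ)) (m : ℕ) (hm : f.natDegree = m)
    (hfull : ∀ x ∈ S, eval (⇑x) (f.coeff m) ≠ 0)
    (hpos : ∀ x ∈ S, ∀ y : ℝ,
      0 < Polynomial.eval y (f.map (eval (⇑x)))) :
    ∀ x ∈ S, ∀ y z : ℝ, y ^ 2 + z ^ 2 = 1 → 0 < evalBar f m (⇑x) y z :=
  stmt_17_general S f m hm hfull hpos
end
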